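/- arXiv:2505.13105 — 3 statements merged into one kernel-verified Lean document; each statement's English description precedes it below -/
import Mathlib

section
/- Suppose A, A' are block lower triangular matrices with A(:t) = A'(:t), and let Z be the block downshift operator. Then ((I - Z·A)^{-1})(:t) = ((I - Z·A')^{-1})(:t). -/
open Matrix MeasureTheory

/-- A matrix with `(T+1)×(T+1)` blocks is block lower triangular if every block
strictly above the block diagonal is zero. -/
def IsBLT {T a b : ℕ} (M : Matrix (Fin (T+1) × Fin a) (Fin (T+1) × Fin b) ℝ) : Prop :=
  ∀ p q, p.1 < q.1 → M p q = 0

/-- Strictly block lower triangular: all blocks on and above the block diagonal vanish. -/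
def IsStrictBLT {T a b : ℕ} (M : Matrix (Fin (T+1) × Fin a) (Fin (T+1) × Fin b) ℝ) : Prop :=
  ∀ p q, p.1 ≤ q.1 → M p q = 0

/-- Block diagonal: off-diagonal blocks vanish. -/
def IsBD {T a b : ℕ} (M : Matrix (Fin (T+1) × Fin a) (Fin (T+1) × Fin b) ℝ) : Prop :=
  ∀ p q, p.1 ≠ q.1 → M p q = 0

/-- `lead t ht M` is the leading principal block submatrix `M(:t)` consisting of the first
`t+1` block rows and block columns of `M`. -/
def lead {T a b : ℕ} (t : ℕ) (ht : t + 1 ≤ T + 1)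
    (M : Matrix (Fin (T+1) × Fin a) (Fin (T+1) × Fin b) ℝ) :
    Matrix (Fin (t+1) × Fin a) (Fin (t+1) × Fin b) ℝ :=
  M.submatrix (Prod.map (Fin.castLE ht) id) (Prod.map (Fin.castLE ht) id)

/-- The block downshift operator: `T` identity `n×n` blocks on the first block subdiagonal,
zeros elsewhere. -/
def dshift (n T : ℕ) : Matrix (Fin (T+1) × Fin n) (Fin (T+1) × Fin n) ℝ :=
  fun p q => if (p.1 : ℕ) = (q.1 : ℕ) + 1 ∧ p.2 = q.2 then 1 else 0

lemma isBLT_dshift (n T : ℕ) : IsBLT (dshift n T) := by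
  intro p q hpq
  simp only [dshift, ite_eq_right_iff]
  rintro ⟨h1, -⟩
  have : (p.1 : ℕ) < q.1 := hpq
  omega

lemma IsBLT.mul {T a b c : ℕ} {M : Matrix (Fin (T+1) × Fin a) (Fin (T+1) × Fin b) ℝ}
    {N : Matrix (Fin (T+1) × Fin b) (Fin (T+1) × Fin c) ℝ}
    (hM : IsBLT M) (hN : IsBLT N) : IsBLT (M * N) := by
  intro p q hpq
  rw [Matrix.mul_apply]
  apply Finset.sum_eq_zero
  intro r _
  rcases lt_or_ge p.1 r.1 with hr | hr
  · rw [hM p r hr, zero_mul]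
  · rw [hN r q (lt_of_le_of_lt hr hpq), mul_zero]

lemma isStrictBLT_dshift_mul {T n b : ℕ}
    {B : Matrix (Fin (T+1) × Fin n) (Fin (T+1) × Fin b) ℝ}
    (hB : IsBLT B) : IsStrictBLT (dshift n T * B) := by
  intro p q hpq
  rw [Matrix.mul_apply]
  apply Finset.sum_eq_zero
  intro r _
  by_cases hr : (p.1 : ℕ) = (r.1 : ℕ) + 1 ∧ p.2 = r.2
  · have hle : (p.1 : ℕ) ≤ q.1 := hpq
    have : r.1 < q.1 := by
      rw [Fin.lt_def]; omega
    rw [hB r q this, mul_zero]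
  · have : dshift n T p r = 0 := by simp only [dshift, if_neg hr]
    rw [this, zero_mul]

lemma IsStrictBLT.pow_apply {T n : ℕ}
    {N : Matrix (Fin (T+1) × Fin n) (Fin (T+1) × Fin n) ℝ}
    (hN : IsStrictBLT N) :
    ∀ k p q, (p.1 : ℕ) < (q.1 : ℕ) + k → (N ^ k) p q = 0 := by
  intro k
  induction k with
  | zero =>
    intro p q hpq
    rw [pow_zero, Matrix.one_apply_ne]
    intro hpaq
    rw [hpaq] at hpq
    omega
  | succ k ih =>
    intro p q hpq
    rw [pow_succ, Matrix.mul_apply]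
    apply Finset.sum_eq_zero
    intro r _
    rcases le_or_gt (r.1 : ℕ) (q.1 : ℕ) with hr | hr
    · rw [hN r q (by rwa [Fin.le_def]), mul_zero]
    · rw [ih p r (by omega), zero_mul]

lemma IsStrictBLT.pow_eq_zero {T n : ℕ}
    {N : Matrix (Fin (T+1) × Fin n) (Fin (T+1) × Fin n) ℝ}
    (hN : IsStrictBLT N) : N ^ (T + 1) = 0 := by
  ext p q
  rw [Matrix.zero_apply]
  apply hN.pow_apply
  have := p.1.isLt
  omega

lemma inv_one_sub_strict {T n : ℕ}
    {N : Matrix (Fin (T+1) × Fin n) (Fin (T+1) × Fin n) ℝ}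
    (hN : IsStrictBLT N) :
    (1 - N)⁻¹ = ∑ k ∈ Finset.range (T + 1), N ^ k := by
  apply Matrix.inv_eq_right_inv
  rw [Finset.mul_sum]
  have key : ∀ k, (1 - N) * N ^ k = N ^ k - N ^ (k + 1) := by
    intro k
    rw [sub_mul, one_mul, pow_succ']
  simp_rw [key]
  rw [Finset.sum_range_sub' (fun k => N ^ k)]
  rw [pow_zero, hN.pow_eq_zero, sub_zero]

lemma lead_mul {T a b c t : ℕ} (ht : t + 1 ≤ T + 1)
    {M : Matrix (Fin (T+1) × Fin a) (Fin (T+1) × Fin b) ℝ}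
    {N : Matrix (Fin (T+1) × Fin b) (Fin (T+1) × Fin c) ℝ}
    (hM : IsBLT M) : lead t ht (M * N) = lead t ht M * lead t ht N := by
  ext p q
  simp only [lead, Matrix.submatrix_apply, Matrix.mul_apply]
  have hinj : Function.Injective (Prod.map (Fin.castLE ht) (id : Fin b → Fin b)) := by
    rintro ⟨x1, x2⟩ ⟨y1, y2⟩ hxy
    simp only [Prod.map, Prod.mk.injEq, id] at hxy
    exact Prod.ext (Fin.castLE_injective ht hxy.1) hxy.2
  have key := Finset.sum_map (Finset.univ : Finset (Fin (t+1) × Fin b))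
    ⟨Prod.map (Fin.castLE ht) id, hinj⟩
    (fun r => M (Prod.map (Fin.castLE ht) id p) r * N r (Prod.map (Fin.castLE ht) id q))
  simp only [Function.Embedding.coeFn_mk] at key
  rw [← key]
  symm
  apply Finset.sum_subset (Finset.subset_univ _)
  intro r _ hr
  have hrt : t < (r.1 : ℕ) := by
    by_contra hle
    push_neg at hle
    apply hr
    rw [Finset.mem_map]
    exact ⟨(⟨r.1, by omega⟩, r.2), Finset.mem_univ _, by
      simp [Prod.ext_iff, Fin.ext_iff]⟩
  have : (Prod.map (Fin.castLE ht) id p).1 < r.1 := by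
    rw [Fin.lt_def]
    have := p.1.isLt
    simp only [Prod.map_fst, Fin.coe_castLE]
    omega
  rw [hM _ r this, zero_mul]

lemma lead_one {T n t : ℕ} (ht : t + 1 ≤ T + 1) :
    lead t ht (1 : Matrix (Fin (T+1) × Fin n) (Fin (T+1) × Fin n) ℝ) = 1 := by
  ext p q
  simp only [lead, Matrix.submatrix_apply, Matrix.one_apply]
  congr 1
  simp [Prod.ext_iff, Fin.ext_iff]

lemma IsBLT.pow {T n : ℕ} {M : Matrix (Fin (T+1) × Fin n) (Fin (T+1) × Fin n) ℝ}
    (hM : IsBLT M) (k : ℕ) : IsBLT (M ^ k) := by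
  induction k with
  | zero =>
    intro p q hpq
    rw [pow_zero, Matrix.one_apply_ne (by intro hh; rw [hh] at hpq; exact lt_irrefl _ hpq)]
  | succ k ih =>
    rw [pow_succ]
    exact ih.mul hM

lemma lead_pow {T n t : ℕ} (ht : t + 1 ≤ T + 1)
    {M : Matrix (Fin (T+1) × Fin n) (Fin (T+1) × Fin n) ℝ}
    (hM : IsBLT M) (k : ℕ) : lead t ht (M ^ k) = (lead t ht M) ^ k := by
  induction k with
  | zero => rw [pow_zero, pow_zero, lead_one]
  | succ k ih => rw [pow_succ, pow_succ, lead_mul ht (hM.pow k), ih]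

lemma lead_sum {T a b t : ℕ} (ht : t + 1 ≤ T + 1) {ι : Type*} (s : Finset ι)
    (f : ι → Matrix (Fin (T+1) × Fin a) (Fin (T+1) × Fin b) ℝ) :
    lead t ht (∑ i ∈ s, f i) = ∑ i ∈ s, lead t ht (f i) := by
  ext p q
  simp [lead, Matrix.sum_apply]

theorem stmt5 {T n t : ℕ} (ht : t + 1 ≤ T + 1)
    (A A' : Matrix (Fin (T+1) × Fin n) (Fin (T+1) × Fin n) ℝ)
    (hA : IsBLT A) (hA' : IsBLT A') (h : lead t ht A = lead t ht A') :
    lead t ht (1 - dshift n T * A)⁻¹ = lead t ht (1 - dshift n T * A')⁻¹ := by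
  have key : ∀ B : Matrix (Fin (T+1) × Fin n) (Fin (T+1) × Fin n) ℝ, IsBLT B →
      lead t ht (1 - dshift n T * B)⁻¹ =
        ∑ k ∈ Finset.range (T + 1),
          (lead t ht (dshift n T) * lead t ht B) ^ k := by
    intro B hB
    rw [inv_one_sub_strict (isStrictBLT_dshift_mul hB), lead_sum]
    refine Finset.sum_congr rfl fun k _ => ?_
    rw [lead_pow ht ((isBLT_dshift n T).mul hB), lead_mul ht (isBLT_dshift n T)]
  rw [key A hA, key A' hA', h]
end

section
/- With Φ_xx = (I - Z(A + BKC))^{-1}, Φ_xy = Φ_xx·Z·B·K, Φ_ux = K·C·Φ_xx, Φ_uy = K + K·C·Φ_xx·Z·B·K, the controller can be recovered from the system response maps via K = Φ_uy - Φ_ux·Φ_xx^{-1}·Φ_xy. -/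
open Matrix MeasureTheory

lemma bd_mul_blt {T a b c : ℕ} {M : Matrix (Fin (T+1) × Fin a) (Fin (T+1) × Fin b) ℝ}
    {N : Matrix (Fin (T+1) × Fin b) (Fin (T+1) × Fin c) ℝ}
    (hM : IsBD M) (hN : IsBLT N) : IsBLT (M * N) := by
  intro p q hpq
  rw [Matrix.mul_apply]
  apply Finset.sum_eq_zero
  intro r _
  by_cases h : p.1 = r.1
  · rw [hN r q (h ▸ hpq), mul_zero]
  · rw [hM p r h, zero_mul]

lemma blt_mul_bd {T a b c : ℕ} {M : Matrix (Fin (T+1) × Fin a) (Fin (T+1) × Fin b) ℝ}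
    {N : Matrix (Fin (T+1) × Fin b) (Fin (T+1) × Fin c) ℝ}
    (hM : IsBLT M) (hN : IsBD N) : IsBLT (M * N) := by
  intro p q hpq
  rw [Matrix.mul_apply]
  apply Finset.sum_eq_zero
  intro r _
  by_cases h : r.1 = q.1
  · rw [hM p r (h ▸ hpq), zero_mul]
  · rw [hN r q h, mul_zero]

lemma dshift_mul_blt {T n a : ℕ} {M : Matrix (Fin (T+1) × Fin n) (Fin (T+1) × Fin a) ℝ}
    (hM : IsBLT M) : IsStrictBLT (dshift n T * M) := by
  intro p q hpq
  rw [Matrix.mul_apply]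
  apply Finset.sum_eq_zero
  intro r _
  by_cases h : (p.1 : ℕ) = (r.1 : ℕ) + 1 ∧ p.2 = r.2
  · have hrq : r.1 < q.1 := by
      rw [Fin.lt_def]
      omega
    rw [hM r q hrq, mul_zero]
  · rw [dshift]
    simp only [h, if_false, zero_mul]

lemma strictBLT_pow {T a : ℕ} {M : Matrix (Fin (T+1) × Fin a) (Fin (T+1) × Fin a) ℝ}
    (hM : IsStrictBLT M) :
    ∀ k (p q : Fin (T+1) × Fin a), (p.1 : ℕ) < (q.1 : ℕ) + k → (M ^ k) p q = 0 := by
  intro k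
  induction k with
  | zero =>
    intro p q hpq
    rw [pow_zero]
    apply Matrix.one_apply_ne
    intro h
    rw [h] at hpq
    omega
  | succ k ih =>
    intro p q hpq
    rw [pow_succ, Matrix.mul_apply]
    apply Finset.sum_eq_zero
    intro r _
    rcases lt_or_ge (p.1 : ℕ) ((r.1 : ℕ) + k) with h | h
    · rw [ih p r h, zero_mul]
    · have : r.1 ≤ q.1 := by rw [Fin.le_def]; omega
      rw [hM r q this, mul_zero]

lemma strictBLT_nilpotent {T a : ℕ} {M : Matrix (Fin (T+1) × Fin a) (Fin (T+1) × Fin a) ℝ}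
    (hM : IsStrictBLT M) : IsNilpotent M := by
  refine ⟨T + 1, ?_⟩
  ext p q
  rw [strictBLT_pow hM (T + 1) p q (by omega)]
  rfl

theorem stmt7 {T n m p : ℕ}
    (A : Matrix (Fin (T+1) × Fin n) (Fin (T+1) × Fin n) ℝ)
    (B : Matrix (Fin (T+1) × Fin n) (Fin (T+1) × Fin p) ℝ)
    (C : Matrix (Fin (T+1) × Fin m) (Fin (T+1) × Fin n) ℝ)
    (K : Matrix (Fin (T+1) × Fin p) (Fin (T+1) × Fin m) ℝ)
    (hA : IsBD A) (hB : IsBD B) (hC : IsBD C) (hK : IsBLT K)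
    (Φxx : Matrix (Fin (T+1) × Fin n) (Fin (T+1) × Fin n) ℝ)
    (Φxy : Matrix (Fin (T+1) × Fin n) (Fin (T+1) × Fin m) ℝ)
    (Φux : Matrix (Fin (T+1) × Fin p) (Fin (T+1) × Fin n) ℝ)
    (Φuy : Matrix (Fin (T+1) × Fin p) (Fin (T+1) × Fin m) ℝ)
    (hΦxx : Φxx = (1 - dshift n T * (A + B * K * C))⁻¹)
    (hΦxy : Φxy = Φxx * dshift n T * B * K)
    (hΦux : Φux = K * C * Φxx)
    (hΦuy : Φuy = K + K * C * Φxx * dshift n T * B * K) :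
    K = Φuy - Φux * Φxx⁻¹ * Φxy := by
  have hblt : IsBLT (A + B * K * C) := by
    intro pq q hpq
    have hA' : A pq q = 0 := hA pq q (ne_of_lt hpq)
    have hBKC : IsBLT (B * K * C) := blt_mul_bd (bd_mul_blt hB hK) hC
    simp [Matrix.add_apply, hA', hBKC pq q hpq]
  have hnil : IsNilpotent (dshift n T * (A + B * K * C)) :=
    strictBLT_nilpotent (dshift_mul_blt hblt)
  have hU : IsUnit (1 - dshift n T * (A + B * K * C)) := hnil.isUnit_one_sub
  have hdet : IsUnit (1 - dshift n T * (A + B * K * C)).det :=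
    (Matrix.isUnit_iff_isUnit_det _).mp hU
  have hdet2 : IsUnit Φxx.det := by
    rw [hΦxx]
    exact Matrix.isUnit_nonsing_inv_det _ hdet
  haveI := Φxx.invertibleOfIsUnitDet hdet2
  subst hΦxy hΦux hΦuy
  simp only [Matrix.mul_assoc]
  rw [Matrix.inv_mul_cancel_left_of_invertible]
  abel
end

section
/- Any pair (Φ_x, Φ_u) of block lower triangular matrices satisfying the state-feedback SLS affine constraint (I - Z·A)·Φ_x - Z·B·Φ_u = I, with Φ_x having invertible leading block Φ_x(:0) (equivalently Φ_x invertible), is achieved by the controller K = Φ_u·Φ_x^{-1}: substituting u = K x into x = Z(A x + B u) + w yields x = Φ_x w and u = Φ_u w. -/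
open Matrix MeasureTheory

theorem stmt17 {T n p : ℕ}
    (A : Matrix (Fin (T+1) × Fin n) (Fin (T+1) × Fin n) ℝ)
    (B : Matrix (Fin (T+1) × Fin n) (Fin (T+1) × Fin p) ℝ)
    (hA : IsBD A) (hB : IsBD B)
    (Φx : Matrix (Fin (T+1) × Fin n) (Fin (T+1) × Fin n) ℝ)
    (Φu : Matrix (Fin (T+1) × Fin p) (Fin (T+1) × Fin n) ℝ)
    (hΦx : IsBLT Φx) (hΦu : IsBLT Φu)
    (hconstr : (1 - dshift n T * A) * Φx - dshift n T * B * Φu = 1)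
    (hinv : IsUnit Φx.det)
    (x w : Fin (T+1) × Fin n → ℝ) (u : Fin (T+1) × Fin p → ℝ)
    (hx : x = (dshift n T).mulVec (A.mulVec x + B.mulVec u) + w)
    (hu : u = (Φu * Φx⁻¹).mulVec x) :
    x = Φx.mulVec w ∧ u = Φu.mulVec w := by
  set Z := dshift n T with hZ
  have h1 : Φx⁻¹ * Φx = 1 := Matrix.nonsing_inv_mul Φx hinv
  have h2 : Z * B * (Φu * Φx⁻¹) * Φx = Z * B * Φu := by
    rw [Matrix.mul_assoc (Z * B), Matrix.mul_assoc Φu, h1, Matrix.mul_one]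
  have hM : ((1 - Z * A) - Z * B * (Φu * Φx⁻¹)) * Φx = 1 := by
    rw [sub_mul, h2]; exact hconstr
  have hMinv : Φx⁻¹ = (1 - Z * A) - Z * B * (Φu * Φx⁻¹) :=
    Matrix.inv_eq_left_inv hM
  have hw' : w = x - (Z.mulVec (A.mulVec x) + Z.mulVec (B.mulVec u)) := by
    rw [Matrix.mulVec_add] at hx
    exact eq_sub_of_add_eq' hx.symm
  have hw : Φx⁻¹.mulVec x = w := by
    rw [hMinv, sub_mulVec, sub_mulVec, one_mulVec,
      ← Matrix.mulVec_mulVec, ← Matrix.mulVec_mulVec, ← Matrix.mulVec_mulVec, ← hu, hw']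
    abel
  constructor
  · rw [← hw, Matrix.mulVec_mulVec, Matrix.mul_nonsing_inv Φx hinv, one_mulVec]
  · rw [hu, ← Matrix.mulVec_mulVec, hw]
end
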